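/- arXiv:2101.00682 — 5 statements merged into one kernel-verified Lean document; each statement's English description precedes it below -/
import Mathlib

section
/- Suppose Γ is a group acting on the hyperbolic plane ℍ by isometries with infimum displacement strictly greater than 45, i.e., dist(γ • z, z) > 45 for every z ∈ ℍ and every γ ≠ 1. Then for any field k the group algebra kΓ has no zero divisors: if a ≠ 0 and x ≠ 0 in kΓ, then a·x ≠ 0. -/
/-!
Fix a base point `o`. Among the pairs of `A × B`, one whose product `a₀ * b₀` moves `o` farthest
is uniquely represented: if also `a * b = a₀ * b₀` with `g = a * a₀⁻¹ ≠ 1`, then `g • o` and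
`g⁻¹ • o` are no farther than `o` from `q = (a₀ * b₀) • o`, and in a `δ`-hyperbolic geodesic space
four-point estimates along a geodesic from `o` to `g • o` give a point that `g` moves by at most
`8δ`. So displacement `> 8δ` makes `Γ` a unique-product group, and `kΓ` has no zero divisors.
The upper half-plane is `5`-hyperbolic by Ptolemy's inequality, as
`sinh (dist z w / 2) = ‖z - w‖ / (2 √(im z * im w))`.
-/

open scoped UpperHalfPlane
open Real Set Finset

/-- `δ`-hyperbolicity in Gromov's four-point form (with `2 * δ`, matching the Gromov-product
definition with constant `δ`). -/
def IsGromovHyperbolic (δ : ℝ) (X : Type*) [PseudoMetricSpace X] : Prop :=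
  ∀ x y z w : X, dist x y + dist z w ≤ max (dist x z + dist y w) (dist x w + dist y z) + 2 * δ

def IsGeodesicSpace (X : Type*) [PseudoMetricSpace X] : Prop :=
  ∀ x y : X, ∃ γ : ℝ → X, γ 0 = x ∧ γ (dist x y) = y ∧
    ∀ s ∈ Icc 0 (dist x y), ∀ t ∈ Icc 0 (dist x y), dist (γ s) (γ t) = |s - t|

theorem IsGeodesicSpace.exists_pair_on_segment {X : Type*} [PseudoMetricSpace X]
    (hX : IsGeodesicSpace X) (x y : X) {s t : ℝ} (hs : 0 ≤ s) (hst : s ≤ t) (ht : t ≤ dist x y) :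
    ∃ p p' : X, dist x p = s ∧ dist p y = dist x y - s ∧ dist x p' = t ∧
      dist p' y = dist x y - t ∧ dist p p' = t - s := by
  obtain ⟨γ, hγ₀, hγ₁, hγ⟩ := hX x y
  have hγ' {u v : ℝ} (hu : 0 ≤ u) (huv : u ≤ v) (hv : v ≤ dist x y) :
      dist (γ u) (γ v) = v - u := by
    rw [hγ u ⟨hu, huv.trans hv⟩ v ⟨hu.trans huv, hv⟩, abs_sub_comm, abs_of_nonneg (by linarith)]
  refine ⟨γ s, γ t, ?_, ?_, ?_, ?_, hγ' hs hst ht⟩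
  · rw [← hγ₀, hγ' le_rfl hs (hst.trans ht), sub_zero]
  · nth_rw 1 [← hγ₁]; rw [hγ' hs (hst.trans ht) le_rfl]
  · rw [← hγ₀, hγ' le_rfl (hs.trans hst) ht, sub_zero]
  · nth_rw 1 [← hγ₁]; rw [hγ' (hs.trans hst) ht le_rfl]

section Displacement

variable {G X : Type*} [Group G] [PseudoMetricSpace X] [MulAction G X] [IsIsometricSMul G X]
  {δ : ℝ}

namespace IsGromovHyperbolic

theorem nonneg (hX : IsGromovHyperbolic δ X) (x : X) : 0 ≤ δ := by
  simpa using hX x x x x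

theorem dist_add_dist_le (hX : IsGromovHyperbolic δ X) {x y z w : X} {c : ℝ}
    (h₁ : dist x z + dist y w ≤ c) (h₂ : dist x w + dist y z ≤ c) :
    dist x y + dist z w ≤ c + 2 * δ :=
  (hX x y z w).trans ((add_le_add_iff_right _).2 (max_le h₁ h₂))

theorem dist_smul_inv_smul_le (hX : IsGromovHyperbolic δ X) {g : G} {o q : X}
    (h₁ : dist (g • o) q ≤ dist q o) (h₂ : dist (g⁻¹ • o) q ≤ dist q o) :
    dist (g • o) (g⁻¹ • o) ≤ dist (g • o) o + 2 * δ := by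
  have hinv : dist (g⁻¹ • o) o = dist (g • o) o := by
    rw [← dist_smul g, smul_inv_smul, dist_comm]
  have := hX.dist_add_dist_le (x := g • o) (y := g⁻¹ • o) (z := q) (w := o)
    (c := dist q o + dist (g • o) o) (by linarith) (by linarith)
  linarith

theorem exists_dist_smul_le (hX : IsGromovHyperbolic δ X) (hgeod : IsGeodesicSpace X) {g : G}
    {o q : X} (h₁ : dist (g • o) q ≤ dist q o) (h₂ : dist (g⁻¹ • o) q ≤ dist q o) :
    ∃ x : X, dist (g • x) x ≤ 8 * δ := by
  have hδ := hX.nonneg o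
  set T := dist (g • o) o with hT
  rcases lt_or_ge T (4 * δ) with hsmall | hlarge
  · exact ⟨o, by linarith⟩
  have hinv : dist (g⁻¹ • o) o = T := by rw [← dist_smul g, smul_inv_smul, dist_comm]
  have hgo := hX.dist_smul_inv_smul_le h₁ h₂
  -- `x` and `x'` lie on a geodesic from `o` to `g • o`, at distance `2δ` from its midpoint
  obtain ⟨x, x', hox, hxg, hox', hx'g, hxx'⟩ := hgeod.exists_pair_on_segment o (g • o)
    (s := T / 2 - 2 * δ) (t := T / 2 + 2 * δ) (by linarith) (by linarith)
    (by rw [dist_comm]; linarith)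
  rw [dist_comm o (g • o), ← hT] at hxg hx'g
  have hxinv : dist x (g⁻¹ • o) ≤ T / 2 + 4 * δ := by
    have := hX.dist_add_dist_le (x := x) (y := g⁻¹ • o) (z := g • o) (w := o)
      (c := 3 * T / 2 + 2 * δ) (by linarith) (by rw [dist_comm x, dist_comm (g⁻¹ • o)]; linarith)
    linarith
  set y := g⁻¹ • x'
  have hgy : g • y = x' := smul_inv_smul g x'
  have hyo : dist y o = T / 2 - 2 * δ := by rw [← dist_smul g, hgy, hx'g]; ring
  have hyinv : dist y (g⁻¹ • o) = T / 2 + 2 * δ := by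
    rw [← dist_smul g, hgy, smul_inv_smul, dist_comm, hox']
  have hxy : dist x y ≤ 4 * δ := by
    have := hX.dist_add_dist_le (x := x) (y := y) (z := g⁻¹ • o) (w := o)
      (c := T + 2 * δ) (by linarith) (by rw [dist_comm x]; linarith)
    linarith
  refine ⟨x, ?_⟩
  calc dist (g • x) x ≤ dist (g • x) x' + dist x' x := dist_triangle _ _ _
    _ = dist x y + dist x x' := by rw [← hgy, dist_smul, dist_comm (g • y)]
    _ ≤ 8 * δ := by linarith

theorem uniqueProds [Nonempty X] (hX : IsGromovHyperbolic δ X) (hgeod : IsGeodesicSpace X)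
    (hdisp : ∀ g : G, g ≠ 1 → ∀ x : X, 8 * δ < dist (g • x) x) : UniqueProds G := by
  refine ⟨fun {A B} hA hB => ?_⟩
  obtain ⟨o⟩ := ‹Nonempty X›
  obtain ⟨⟨a₀, b₀⟩, hp, hmax⟩ :=
    exists_max_image (A ×ˢ B) (fun p : G × G => dist ((p.1 * p.2) • o) o) (hA.product hB)
  obtain ⟨ha₀, hb₀⟩ := mem_product.1 hp
  refine ⟨a₀, ha₀, b₀, hb₀, fun a b ha hb hab => ?_⟩
  obtain ⟨g, rfl⟩ : ∃ g, a = g * a₀ := ⟨a * a₀⁻¹, by group⟩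
  have h₁ : dist (g • o) ((a₀ * b₀) • o) ≤ dist ((a₀ * b₀) • o) o := by
    have : (a₀ * b₀) • o = g • (a₀ * b) • o := by rw [smul_smul, ← hab, mul_assoc]
    calc dist (g • o) ((a₀ * b₀) • o) = dist ((a₀ * b) • o) o := by
          rw [this, dist_smul, dist_comm]
      _ ≤ _ := hmax (a₀, b) (mem_product.2 ⟨ha₀, hb⟩)
  have h₂ : dist (g⁻¹ • o) ((a₀ * b₀) • o) ≤ dist ((a₀ * b₀) • o) o := by
    have : (a₀ * b₀) • o = g⁻¹ • (g * a₀ * b₀) • o := by rw [smul_smul]; group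
    calc dist (g⁻¹ • o) ((a₀ * b₀) • o) = dist ((g * a₀ * b₀) • o) o := by
          rw [this, dist_smul, dist_comm]
      _ ≤ _ := hmax (g * a₀, b₀) (mem_product.2 ⟨ha, hb₀⟩)
  obtain rfl : g = 1 := by
    by_contra hg
    obtain ⟨x, hx⟩ := hX.exists_dist_smul_le hgeod h₁ h₂
    exact (hdisp g hg x).not_ge hx
  rw [one_mul] at hab ⊢
  exact ⟨rfl, mul_left_cancel hab⟩

end IsGromovHyperbolic

end Displacement

theorem Real.sinh_le_exp_div_two (x : ℝ) : sinh x ≤ exp x / 2 := by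
  rw [sinh_eq]; linarith [exp_pos (-x)]

theorem Real.exp_le_four_mul_sinh {x : ℝ} (hx : 1 ≤ x) : exp x ≤ 4 * sinh x := by
  have h2 : 2 ≤ exp x := by linarith [add_one_le_exp x]
  have : exp (-x) ≤ 1 := exp_le_one_iff.2 (by linarith)
  rw [sinh_eq]; linarith

namespace UpperHalfPlane

open scoped MatrixGroups

theorem sinh_half_dist_mul_sinh_half_dist_le (z₁ z₂ z₃ z₄ : ℍ) :
    sinh (dist z₁ z₂ / 2) * sinh (dist z₃ z₄ / 2) ≤
      sinh (dist z₁ z₃ / 2) * sinh (dist z₂ z₄ / 2) +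
        sinh (dist z₁ z₄ / 2) * sinh (dist z₂ z₃ / 2) := by
  simp only [sinh_half_dist, Real.sqrt_mul (im_pos _).le]
  have h₁ := Real.sqrt_pos.2 z₁.im_pos
  have h₂ := Real.sqrt_pos.2 z₂.im_pos
  have h₃ := Real.sqrt_pos.2 z₃.im_pos
  have h₄ := Real.sqrt_pos.2 z₄.im_pos
  have ptolemy := EuclideanGeometry.mul_dist_le_mul_dist_add_mul_dist (z₁ : ℂ) z₃ z₂ z₄
  rw [dist_comm (z₃ : ℂ) z₂] at ptolemy
  field_simp
  linarith

theorem sinh_half_dist_nonneg (z w : ℍ) : 0 ≤ sinh (dist z w / 2) :=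
  sinh_nonneg_iff.2 (by positivity)

theorem isGromovHyperbolic : IsGromovHyperbolic 5 ℍ := by
  intro z₁ z₂ z₃ z₄
  set M := max (dist z₁ z₃ + dist z₂ z₄) (dist z₁ z₄ + dist z₂ z₃)
  have hM₁ : dist z₁ z₃ + dist z₂ z₄ ≤ M := le_max_left _ _
  have hM₂ : dist z₁ z₄ + dist z₂ z₃ ≤ M := le_max_right _ _
  rcases le_or_gt (dist z₁ z₂) 2 with h₁₂ | h₁₂
  · have := dist_triangle4 z₃ z₂ z₁ z₄
    rw [dist_comm z₃ z₂, dist_comm z₂ z₁] at this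
    linarith
  rcases le_or_gt (dist z₃ z₄) 2 with h₃₄ | h₃₄
  · have := dist_triangle4 z₁ z₃ z₄ z₂
    rw [dist_comm z₄] at this
    linarith
  have hsinh {z w : ℍ} (h : 2 < dist z w) : exp (dist z w / 2) ≤ 4 * sinh (dist z w / 2) :=
    exp_le_four_mul_sinh (by linarith)
  have hprod (z w z' w' : ℍ) :
      sinh (dist z w / 2) * sinh (dist z' w' / 2) ≤ exp ((dist z w + dist z' w') / 2) / 4 := by
    calc _ ≤ exp (dist z w / 2) / 2 * (exp (dist z' w' / 2) / 2) :=
          mul_le_mul (sinh_le_exp_div_two _) (sinh_le_exp_div_two _)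
            (sinh_half_dist_nonneg _ _) (by positivity)
      _ = _ := by rw [add_div, exp_add]; ring
  have key : exp ((dist z₁ z₂ + dist z₃ z₄) / 2) ≤ exp 5 * exp (M / 2) := by
    have h8 : (8 : ℝ) ≤ exp 5 := by
      have : (7 / 2 : ℝ) ≤ exp (5 / 2) := by linarith [add_one_le_exp (5 / 2 : ℝ)]
      calc (8 : ℝ) ≤ (7 / 2) ^ 2 := by norm_num
        _ ≤ exp (5 / 2) ^ 2 := by gcongr
        _ = exp 5 := by rw [← exp_nat_mul]; norm_num
    calc exp ((dist z₁ z₂ + dist z₃ z₄) / 2) = exp (dist z₁ z₂ / 2) * exp (dist z₃ z₄ / 2) := by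
          rw [add_div, exp_add]
      _ ≤ 4 * sinh (dist z₁ z₂ / 2) * (4 * sinh (dist z₃ z₄ / 2)) :=
          mul_le_mul (hsinh h₁₂) (hsinh h₃₄) (by positivity) (by positivity)
      _ ≤ 16 * (sinh (dist z₁ z₃ / 2) * sinh (dist z₂ z₄ / 2) +
            sinh (dist z₁ z₄ / 2) * sinh (dist z₂ z₃ / 2)) := by
          linarith [sinh_half_dist_mul_sinh_half_dist_le z₁ z₂ z₃ z₄]
      _ ≤ 4 * (exp ((dist z₁ z₃ + dist z₂ z₄) / 2) + exp ((dist z₁ z₄ + dist z₂ z₃) / 2)) := by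
          linarith [hprod z₁ z₃ z₂ z₄, hprod z₁ z₄ z₂ z₃]
      _ ≤ 8 * exp (M / 2) := by
          have := exp_le_exp.2 (div_le_div_of_nonneg_right hM₁ two_pos.le)
          have := exp_le_exp.2 (div_le_div_of_nonneg_right hM₂ two_pos.le)
          linarith
      _ ≤ exp 5 * exp (M / 2) := by gcongr
  rw [← exp_add, exp_le_exp] at key
  linarith

theorem exists_isometryEquiv_re_eq (z w : ℍ) : ∃ e : ℍ ≃ᵢ ℍ, (e z).re = (e w).re := by
  rcases eq_or_ne z.re w.re with h | h
  · exact ⟨IsometryEquiv.refl ℍ, h⟩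
  -- `z` and `w` lie on a circle of radius `r` centred at `c ∈ ℝ`; translating it by `r - c`
  -- makes it pass through `0`, and then `S` maps it onto the line `re = -1 / (2 * r)`
  obtain ⟨c, hc⟩ : ∃ c : ℝ, c * (2 * (z.re - w.re)) = z.re ^ 2 + z.im ^ 2 - w.re ^ 2 - w.im ^ 2 :=
    ⟨_, div_mul_cancel₀ _ (mul_ne_zero two_ne_zero (sub_ne_zero.2 h))⟩
  set r := √((z.re - c) ^ 2 + z.im ^ 2)
  have hr : 0 < r := sqrt_pos.2 (by nlinarith [z.im_pos])
  have hz : (z.re - c) ^ 2 + z.im ^ 2 = r ^ 2 := (sq_sqrt (by positivity)).symm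
  have hw : (w.re - c) ^ 2 + w.im ^ 2 = r ^ 2 := by linear_combination hz + hc
  let e : ℍ ≃ᵢ ℍ := (⟨AddAction.toPerm (r - c), isometry_real_vadd _⟩ : ℍ ≃ᵢ ℍ).trans
    (IsometryEquiv.constSMul (ModularGroup.S : SL(2, ℝ)))
  have he (y : ℍ) (hy : (y.re - c) ^ 2 + y.im ^ 2 = r ^ 2) : (e y).re = -1 / (2 * r) := by
    change (ModularGroup.S • ((r - c) +ᵥ y)).re = _
    rw [modular_S_smul]
    have hn : Complex.normSq ((r - c) +ᵥ y : ℍ) = 2 * r * (r - c + y.re) := by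
      simp only [Complex.normSq_apply, coe_re, coe_im, vadd_re, vadd_im]
      linear_combination hy
    have hpos : 0 < r - c + y.re := by nlinarith [y.im_pos]
    simp only [mk_re, Complex.inv_re, Complex.neg_re, Complex.normSq_neg, coe_re, vadd_re, hn]
    field_simp
  exact ⟨e, (he z hz).trans (he w hw).symm⟩

theorem exists_isometry_real_of_re_eq {z w : ℍ} (h : z.re = w.re) :
    ∃ γ : ℝ → ℍ, Isometry γ ∧ γ 0 = z ∧ γ (dist z w) = w := by
  wlog hzw : z.im ≤ w.im generalizing z w
  · obtain ⟨γ, hγ, h₀, h₁⟩ := this h.symm (le_of_not_ge hzw)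
    refine ⟨fun t => γ (dist w z - t), hγ.comp ?_, by simpa using h₁, by simpa [dist_comm] using h₀⟩
    exact Isometry.of_dist_eq fun s t => by simp only [Real.dist_eq]; rw [abs_sub_comm]; ring_nf
  refine ⟨fun t => mk ⟨z.re, exp (log z.im + t)⟩ (exp_pos _),
    (isometry_vertical_line z.re).comp (IsometryEquiv.addLeft _).isometry, ?_, ?_⟩
  · exact ext_re_im rfl (by simp [exp_log z.im_pos])
  · have : dist z w = log w.im - log z.im := by
      rw [dist_of_re_eq h, Real.dist_eq, abs_sub_comm,
        abs_of_nonneg (sub_nonneg.2 (log_le_log z.im_pos hzw))]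
    exact ext_re_im h (by simp [this, exp_log w.im_pos])

theorem exists_isometry_real (z w : ℍ) :
    ∃ γ : ℝ → ℍ, Isometry γ ∧ γ 0 = z ∧ γ (dist z w) = w := by
  obtain ⟨e, he⟩ := exists_isometryEquiv_re_eq z w
  obtain ⟨γ, hγ, h₀, h₁⟩ := exists_isometry_real_of_re_eq he
  rw [e.dist_eq] at h₁
  exact ⟨e.symm ∘ γ, e.symm.isometry.comp hγ, by simp [h₀], by simp [h₁]⟩

theorem isGeodesicSpace : IsGeodesicSpace ℍ := fun z w => by
  obtain ⟨γ, hγ, h₀, h₁⟩ := exists_isometry_real z w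
  exact ⟨γ, h₀, h₁, fun s _ t _ => by rw [hγ.dist_eq, Real.dist_eq]⟩

end UpperHalfPlane

/-- Delzant's theorem for the hyperbolic plane: the group algebra of a group acting by
isometries on `ℍ` with infimum displacement greater than `45` has no zero divisors. -/
theorem no_zero_divisors_of_displacement {Γ : Type*} [Group Γ] [MulAction Γ ℍ]
    (isom : ∀ (γ : Γ) (z w : ℍ), dist (γ • z) (γ • w) = dist z w)
    (disp : ∀ (γ : Γ) (z : ℍ), γ ≠ 1 → 45 < dist (γ • z) z)
    (k : Type*) [Field k]
    (a x : MonoidAlgebra k Γ) (ha : a ≠ 0) (hx : x ≠ 0) :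
    a * x ≠ 0 := by
  have : IsIsometricSMul Γ ℍ := ⟨fun γ => Isometry.of_dist_eq (isom γ)⟩
  have : UniqueProds Γ :=
    UpperHalfPlane.isGromovHyperbolic.uniqueProds UpperHalfPlane.isGeodesicSpace
      fun γ hγ z => by linarith [disp γ z hγ]
  exact mul_ne_zero ha hx
end

section
/- For all points o, p, q, m in the hyperbolic plane ℍ, if m is a midpoint of p and q, then max(dist(o,p), dist(o,q)) ≥ dist(o,m) + dist(p,q)/2 − 5. -/
open scoped UpperHalfPlane

open Real

/-!
Map `ℍ` to the hyperboloid model: `z ↦ (1/y, x/y, (x² + y²)/y)` lands on `⟪v, v⟫ = 1` for a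
Lorentzian form with `cosh (dist z w) = ⟪z, w⟫`. If `m` is a midpoint of `p` and `q` and
`k = cosh (dist p q / 2)`, then `p + q - 2k m` is a null vector orthogonal to the timelike `m`,
hence zero. Pairing `p + q = 2k m` with `o` gives the median identity
`cosh d(o,p) + cosh d(o,q) = 2 cosh (d(p,q)/2) cosh d(o,m)`, and `eᵗ/2 ≤ cosh t ≤ eᵗ` (`t ≥ 0`)
turns it into the inequality with constant `log 4 < 5`.
-/

/-- A form of signature `(+, -, -)`, written in light-cone coordinates. -/
noncomputable def lorentzForm (u v : ℝ × ℝ × ℝ) : ℝ :=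
  (u.1 * v.2.2 + u.2.2 * v.1) / 2 - u.2.1 * v.2.1

theorem lorentzForm_add_right (u v w : ℝ × ℝ × ℝ) :
    lorentzForm u (v + w) = lorentzForm u v + lorentzForm u w := by
  simp only [lorentzForm, Prod.fst_add, Prod.snd_add]
  ring

theorem lorentzForm_smul_right (c : ℝ) (u v : ℝ × ℝ × ℝ) :
    lorentzForm u (c • v) = c * lorentzForm u v := by
  simp only [lorentzForm, Prod.smul_fst, Prod.smul_snd, smul_eq_mul]
  ring

theorem eq_zero_of_lorentzForm_self_eq_zero_of_lorentzForm_eq_zero {x v : ℝ × ℝ × ℝ}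
    (hv : 0 < lorentzForm v v) (hx : lorentzForm x x = 0) (hxv : lorentzForm x v = 0) :
    x = 0 := by
  obtain ⟨a, b, c⟩ := x
  obtain ⟨A, B, C⟩ := v
  simp only [lorentzForm] at hv hx hxv
  have hL : 0 < A * C - B ^ 2 := by linarith
  have hsq : (a * C - c * A) ^ 2 + 4 * b ^ 2 * (A * C - B ^ 2) = 0 := by
    linear_combination 2 * (a * C + c * A + 2 * b * B) * hxv - 4 * (A * C) * hx
  obtain ⟨h₁, h₂⟩ := (add_eq_zero_iff_of_nonneg (sq_nonneg _)
    (mul_nonneg (by positivity) hL.le)).1 hsq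
  obtain rfl : b = 0 := by simpa [hL.ne'] using h₂
  have hcross : a * C = c * A := sub_eq_zero.1 (pow_eq_zero_iff two_ne_zero |>.1 h₁)
  have hA : A ≠ 0 := by rintro rfl; nlinarith
  have hC : C ≠ 0 := by rintro rfl; nlinarith
  rcases mul_eq_zero.1 (show a * c = 0 by linarith) with rfl | rfl
  · simp_all
  · simp_all

theorem add_eq_smul_of_lorentzForm {P Q M : ℝ × ℝ × ℝ} {k : ℝ}
    (hP : lorentzForm P P = 1) (hQ : lorentzForm Q Q = 1) (hM : lorentzForm M M = 1)
    (hPQ : lorentzForm P Q = 2 * k ^ 2 - 1) (hPM : lorentzForm P M = k)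
    (hQM : lorentzForm Q M = k) : P + Q = (2 * k) • M := by
  rw [← sub_eq_zero]
  refine eq_zero_of_lorentzForm_self_eq_zero_of_lorentzForm_eq_zero (hM ▸ one_pos) ?_ ?_
  all_goals
    simp only [lorentzForm, Prod.fst_sub, Prod.snd_sub, Prod.fst_add, Prod.snd_add,
      Prod.smul_fst, Prod.smul_snd, smul_eq_mul] at *
  · linear_combination hP + hQ + 2 * hPQ - 4 * k * hPM - 4 * k * hQM + 4 * k ^ 2 * hM
  · linear_combination hPM + hQM - 2 * k * hM

namespace UpperHalfPlane

noncomputable def toHyperboloid (z : ℍ) : ℝ × ℝ × ℝ :=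
  (z.im⁻¹, z.re / z.im, (z.re ^ 2 + z.im ^ 2) / z.im)

theorem cosh_dist_eq_lorentzForm (z w : ℍ) :
    cosh (dist z w) = lorentzForm (toHyperboloid z) (toHyperboloid w) := by
  rw [cosh_dist']
  simp only [lorentzForm, toHyperboloid]
  field_simp
  ring

theorem lorentzForm_toHyperboloid_self (z : ℍ) :
    lorentzForm (toHyperboloid z) (toHyperboloid z) = 1 := by
  rw [← cosh_dist_eq_lorentzForm, dist_self, cosh_zero]

theorem toHyperboloid_add_of_midpoint {p q m : ℍ}
    (hpm : dist p m = dist p q / 2) (hmq : dist m q = dist p q / 2) :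
    toHyperboloid p + toHyperboloid q = (2 * cosh (dist p q / 2)) • toHyperboloid m := by
  have hpq : cosh (dist p q) = 2 * cosh (dist p q / 2) ^ 2 - 1 := by
    have h := cosh_two_mul (dist p q / 2)
    rw [mul_div_cancel₀ _ two_ne_zero, sinh_sq] at h
    linarith
  refine add_eq_smul_of_lorentzForm (lorentzForm_toHyperboloid_self p)
    (lorentzForm_toHyperboloid_self q) (lorentzForm_toHyperboloid_self m) ?_ ?_ ?_
  · rw [← cosh_dist_eq_lorentzForm, hpq]
  · rw [← cosh_dist_eq_lorentzForm, hpm]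
  · rw [← cosh_dist_eq_lorentzForm, dist_comm, hmq]

theorem cosh_dist_add_cosh_dist_of_midpoint (o : ℍ) {p q m : ℍ}
    (hpm : dist p m = dist p q / 2) (hmq : dist m q = dist p q / 2) :
    cosh (dist o p) + cosh (dist o q) = 2 * cosh (dist p q / 2) * cosh (dist o m) := by
  simp only [cosh_dist_eq_lorentzForm]
  rw [← lorentzForm_add_right, toHyperboloid_add_of_midpoint hpm hmq, lorentzForm_smul_right]

end UpperHalfPlane

namespace Real

theorem exp_le_two_mul_cosh (x : ℝ) : exp x ≤ 2 * cosh x := by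
  rw [cosh_eq]
  linarith [exp_pos (-x)]

theorem cosh_le_exp_of_nonneg {x : ℝ} (hx : 0 ≤ x) : cosh x ≤ exp x := by
  rw [← cosh_add_sinh]
  linarith [sinh_nonneg_iff.2 hx]

theorem add_le_max_add_log_four_of_cosh_add_cosh_eq {a b x y : ℝ} (hx : 0 ≤ x) (hy : 0 ≤ y)
    (h : cosh x + cosh y = 2 * cosh a * cosh b) : a + b ≤ max x y + log 4 := by
  rw [← exp_le_exp, exp_add, exp_add, exp_log four_pos]
  have hx' := (cosh_le_exp_of_nonneg hx).trans (exp_le_exp.2 (le_max_left x y))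
  have hy' := (cosh_le_exp_of_nonneg hy).trans (exp_le_exp.2 (le_max_right x y))
  calc exp a * exp b ≤ (2 * cosh a) * (2 * cosh b) :=
        mul_le_mul (exp_le_two_mul_cosh a) (exp_le_two_mul_cosh b) (exp_pos b).le
          (by positivity)
    _ = 2 * (cosh x + cosh y) := by rw [h]; ring
    _ ≤ exp (max x y) * 4 := by linarith

end Real

/-- The basic δ-hyperbolicity inequality for the hyperbolic plane with `δ = 5`. -/
theorem hyperbolicity_inequality (o p q m : ℍ)
    (hpm : dist p m = dist p q / 2) (hmq : dist m q = dist p q / 2) :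
    dist o m + dist p q / 2 - 5 ≤ max (dist o p) (dist o q) := by
  have key := add_le_max_add_log_four_of_cosh_add_cosh_eq dist_nonneg dist_nonneg
    (UpperHalfPlane.cosh_dist_add_cosh_dist_of_midpoint o hpm hmq)
  have hlog : log 4 ≤ 5 := by linarith [log_le_sub_one_of_pos (four_pos : (0 : ℝ) < 4)]
  linarith
end

section
/- Let X be a nonempty finite subset of the hyperbolic plane ℍ. Then there exists a point m ∈ ℍ such that X is contained in the closed ball of radius diam(X)/2 + 5 centered at m. -/
/-!
Let `x, y ∈ X` realise the diameter `D` and let `m` be the midpoint of the geodesic from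
`x` to `y`. The hyperbolic median identity
`cosh d(z,x) + cosh d(z,y) = 2 cosh (D/2) cosh d(z,m)`
bounds `cosh d(z,m)` by `cosh D / cosh (D/2) ≤ 2 cosh (D/2) ≤ cosh (D/2 + 5)` for every
`z ∈ X`.
-/

open scoped UpperHalfPlane
open Real

namespace Real

lemma cosh_mul_cosh_le_cosh_add {x y : ℝ} (hx : 0 ≤ x) (hy : 0 ≤ y) :
    cosh x * cosh y ≤ cosh (x + y) := by
  rw [cosh_add]
  nlinarith [sinh_nonneg_iff.2 hx, sinh_nonneg_iff.2 hy]

lemma two_le_cosh_five : 2 ≤ cosh 5 := by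
  rw [cosh_eq]
  linarith [add_one_le_exp (5 : ℝ), exp_pos (-5)]

end Real

namespace UpperHalfPlane

lemma cosh_half_dist_sq (x y : ℍ) :
    cosh (dist x y / 2) ^ 2 = ((x.re - y.re) ^ 2 + (x.im + y.im) ^ 2) / (4 * x.im * y.im) := by
  have h := cosh_dist' x y
  rw [← mul_div_cancel₀ (dist x y) two_ne_zero, cosh_two_mul, sinh_sq] at h
  have := x.im_pos
  have := y.im_pos
  field_simp at h ⊢
  linear_combination h

/-- In the hyperboloid model this point lifts to `(X + Y) / (2 cosh (d(x,y)/2))`, where `X`, `Y`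
are the lifts of `x`, `y`; the median identity `cosh_dist_add_cosh_dist` is then linearity of the
Minkowski form. -/
noncomputable def geodesicMidpoint (x y : ℍ) : ℍ :=
  mk ⟨(x.re * y.im + y.re * x.im) / (x.im + y.im),
    2 * cosh (dist x y / 2) * x.im * y.im / (x.im + y.im)⟩ <| by
    have := x.im_pos
    have := y.im_pos
    dsimp only
    positivity

lemma geodesicMidpoint_re (x y : ℍ) :
    (geodesicMidpoint x y).re = (x.re * y.im + y.re * x.im) / (x.im + y.im) := rfl

lemma geodesicMidpoint_im (x y : ℍ) :
    (geodesicMidpoint x y).im = 2 * cosh (dist x y / 2) * x.im * y.im / (x.im + y.im) := rfl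

lemma cosh_dist_add_cosh_dist (x y z : ℍ) :
    cosh (dist z x) + cosh (dist z y) =
      2 * cosh (dist x y / 2) * cosh (dist z (geodesicMidpoint x y)) := by
  have hc := cosh_half_dist_sq x y
  have := x.im_pos
  have := y.im_pos
  have := z.im_pos
  have := cosh_pos (dist x y / 2)
  rw [cosh_dist', cosh_dist', cosh_dist', geodesicMidpoint_re, geodesicMidpoint_im]
  field_simp at hc ⊢
  linear_combination -(x.im * y.im) * hc

lemma dist_geodesicMidpoint_le {x y z : ℍ} (hzx : dist z x ≤ dist x y)
    (hzy : dist z y ≤ dist x y) : dist z (geodesicMidpoint x y) ≤ dist x y / 2 + 5 := by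
  set D := dist x y
  set d := dist z (geodesicMidpoint x y)
  have hD : 0 ≤ D := dist_nonneg
  have cosh_le_iff {a b : ℝ} (ha : 0 ≤ a) (hb : 0 ≤ b) : cosh a ≤ cosh b ↔ a ≤ b :=
    cosh_strictMonoOn.le_iff_le ha hb
  have hmedian : 2 * cosh (D / 2) * cosh d ≤ 2 * cosh D := by
    rw [← cosh_dist_add_cosh_dist]
    linarith [(cosh_le_iff dist_nonneg hD).2 hzx, (cosh_le_iff dist_nonneg hD).2 hzy]
  have hdouble : cosh D = 2 * cosh (D / 2) ^ 2 - 1 := by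
    have h := cosh_two_mul (D / 2)
    rw [show 2 * (D / 2) = D by ring, sinh_sq] at h
    linarith
  have hd : cosh d ≤ 2 * cosh (D / 2) := by
    nlinarith [cosh_pos (D / 2)]
  have : cosh d ≤ cosh (D / 2 + 5) :=
    calc cosh d ≤ cosh (D / 2) * cosh 5 := by nlinarith [two_le_cosh_five, cosh_pos (D / 2)]
      _ ≤ cosh (D / 2 + 5) := cosh_mul_cosh_le_cosh_add (by linarith) (by norm_num)
  exact (cosh_le_iff dist_nonneg (by linarith)).1 this

end UpperHalfPlane

/-- Any nonempty finite subset of the hyperbolic plane of diameter `D` is contained in a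
closed ball of radius `D/2 + 5`. -/
theorem finite_set_in_small_ball (X : Set ℍ) (hfin : X.Finite) (hne : X.Nonempty) :
    ∃ m : ℍ, X ⊆ Metric.closedBall m (Metric.diam X / 2 + 5) := by
  obtain ⟨⟨x, y⟩, ⟨hx, hy⟩, hmax⟩ :=
    Set.exists_max_image (X ×ˢ X) (fun p => dist p.1 p.2) (hfin.prod hfin) (hne.prod hne)
  refine ⟨UpperHalfPlane.geodesicMidpoint x y, fun z hz => ?_⟩
  have hxy : dist x y ≤ Metric.diam X := Metric.dist_le_diam_of_mem hfin.isBounded hx hy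
  have hz_mid :=
    UpperHalfPlane.dist_geodesicMidpoint_le (hmax (z, x) ⟨hz, hx⟩) (hmax (z, y) ⟨hz, hy⟩)
  rw [Metric.mem_closedBall]
  linarith
end

section
/- Let X be a nonempty finite subset of the hyperbolic plane ℍ with diameter D, let c be a barycenter of X, let o ∈ ℍ and R ≥ 0 be such that X ⊆ closedBall(o, R) and some point p' ∈ X satisfies dist(o, p') = R (so closedBall(o, R) is the smallest ball centered at o containing X). Then R − D/2 − 5 ≤ dist(o, c) ≤ R − D/2 + 15. -/
/-!
In a metric space satisfying Gromov's four-point condition with constant `δ`, let `x, y` realize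
the diameter `D` of the compact set `closure X` and let `m` be their midpoint. The four-point condition applied to
`z, m, x, y` shows that any point `z` whose ball of radius `ρ` contains `x` and `y` lies within
`ρ - D/2 + δ` of `m`. Thus `X` lies in the ball of radius `D/2 + δ` around `m`, so the minimal
radius is `r ≤ D/2 + δ`, and both `o` and `c` are within `R - D/2 + δ`, resp. `r - D/2 + δ`,
of `m`. This gives `R - D/2 - δ ≤ dist o c ≤ R - D/2 + 3δ`.

The hyperbolic plane satisfies the four-point condition with `δ = 2 log 2`: writing
`e^{d(z,w)/2} = (|z - w| + |z - w̄|) / (2 √(Im z Im w))`, it follows from Ptolemy's inequality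
in `ℂ` applied to the points and their reflections. Midpoints exist because a Möbius
transformation moves any two points onto a vertical line, which is an isometric copy of `ℝ`.
-/

open scoped UpperHalfPlane ComplexConjugate MatrixGroups
open Metric

/-- `c` is a barycenter of `X` if it is the center of a smallest closed ball containing
`X`. -/
def IsBarycenter (X : Set ℍ) (c : ℍ) : Prop :=
  ∃ r : ℝ, 0 ≤ r ∧ X ⊆ Metric.closedBall c r ∧
    ∀ (c' : ℍ) (r' : ℝ), 0 ≤ r' → X ⊆ Metric.closedBall c' r' → r ≤ r'

lemma IsCompact.exists_dist_eq_diam {α : Type*} [PseudoMetricSpace α] {s : Set α}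
    (hs : IsCompact s) (hne : s.Nonempty) : ∃ x ∈ s, ∃ y ∈ s, dist x y = diam s := by
  obtain ⟨⟨x, y⟩, ⟨hx, hy⟩, hmax⟩ :=
    (hs.prod hs).exists_isMaxOn (hne.prod hne) continuous_dist.continuousOn
  refine ⟨x, hx, y, hy, le_antisymm (dist_le_diam_of_mem hs.isBounded hx hy) ?_⟩
  exact diam_le_of_forall_dist_le dist_nonneg fun z hz w hw => hmax (Set.mk_mem_prod hz hw)

def FourPointCondition (E : Type*) [PseudoMetricSpace E] (δ : ℝ) : Prop :=
  ∀ w x y z : E, dist w x + dist y z ≤ max (dist w y + dist x z) (dist w z + dist x y) + δ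

namespace FourPointCondition

variable {E : Type*} [PseudoMetricSpace E] {δ : ℝ}

lemma nonneg [Nonempty E] (hE : FourPointCondition E δ) : 0 ≤ δ := by
  obtain ⟨x⟩ := ‹Nonempty E›
  simpa using hE x x x x

lemma dist_le_of_dist_eq_half (hE : FourPointCondition E δ) {x y m z : E} {ρ : ℝ}
    (hxm : dist x m = dist x y / 2) (hym : dist y m = dist x y / 2)
    (hxz : dist x z ≤ ρ) (hyz : dist y z ≤ ρ) : dist z m ≤ ρ - dist x y / 2 + δ := by
  have h := hE z m x y
  rw [dist_comm z x, dist_comm z y, dist_comm m x, dist_comm m y, hxm, hym] at h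
  have : max (dist x z + dist x y / 2) (dist y z + dist x y / 2) ≤ ρ + dist x y / 2 :=
    max_le (by linarith) (by linarith)
  linarith

theorem dist_center_mem_Icc (hE : FourPointCondition E δ)
    (hmid : ∀ x y : E, ∃ m, dist x m = dist x y / 2 ∧ dist y m = dist x y / 2)
    {s : Set E} (hs : IsCompact s) {c : E} {r : ℝ} (hsc : s ⊆ closedBall c r)
    (hmin : ∀ c' r', 0 ≤ r' → s ⊆ closedBall c' r' → r ≤ r')
    {o p : E} {R : ℝ} (hso : s ⊆ closedBall o R) (hp : p ∈ s) (hop : dist o p = R) :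
    dist o c ∈ Set.Icc (R - diam s / 2 - δ) (R - diam s / 2 + 3 * δ) := by
  obtain ⟨x, hx, y, hy, hxy⟩ := hs.exists_dist_eq_diam ⟨p, hp⟩
  obtain ⟨m, hxm, hym⟩ := hmid x y
  have hball : ∀ {z ρ}, s ⊆ closedBall z ρ → dist z m ≤ ρ - diam s / 2 + δ := fun h =>
    hxy ▸ hE.dist_le_of_dist_eq_half hxm hym (h hx) (h hy)
  have hδ : 0 ≤ δ := have : Nonempty E := ⟨p⟩; hE.nonneg
  have hr : r ≤ diam s / 2 + δ := by
    refine hmin m _ (by positivity) fun z hz => ?_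
    have := hball fun w hw => dist_le_diam_of_mem hs.isBounded hw hz
    rw [mem_closedBall]
    linarith
  have hpc : dist p c ≤ r := hsc hp
  have hom := hball hso
  have hcm := hball hsc
  constructor
  · linarith [dist_triangle o c p, dist_comm c p]
  · linarith [dist_triangle_right o c m]

end FourPointCondition

/-- `x` and `y` lie on the circle through `u` centred at the real point `u + k / 2`. -/
lemma Complex.exists_normSq_sub_eq_mul_re_sub {x y : ℂ} (h : x.re ≠ y.re) :
    ∃ u k : ℝ, normSq (x - u) = k * (x.re - u) ∧ normSq (y - u) = k * (y.re - u) := by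
  obtain ⟨s, hs⟩ : ∃ s : ℝ, s * (2 * (x.re - y.re)) = normSq x - normSq y :=
    ⟨_, div_mul_cancel₀ _ (mul_ne_zero two_ne_zero (sub_ne_zero.2 h))⟩
  obtain ⟨ρ, hρ⟩ : ∃ ρ : ℝ, ρ ^ 2 = normSq (x - s) := ⟨_, Real.sq_sqrt (normSq_nonneg _)⟩
  refine ⟨s - ρ, 2 * ρ, ?_, ?_⟩ <;>
  simp only [normSq_apply, sub_re, sub_im, ofReal_re, ofReal_im, ofReal_sub] at hs hρ ⊢
  · linear_combination -hρ
  · linear_combination -hρ + hs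

namespace UpperHalfPlane

open Real

lemma dist_coe_le_dist_coe_conj (z w : ℍ) : dist (z : ℂ) w ≤ dist (z : ℂ) (conj (w : ℂ)) := by
  have h := (sinh_lt_cosh (dist z w / 2)).le
  rwa [sinh_half_dist, cosh_half_dist, div_le_div_iff_of_pos_right (by positivity)] at h

lemma dist_add_dist_conj_eq (z w : ℍ) :
    dist (z : ℂ) w + dist (z : ℂ) (conj (w : ℂ)) = 2 * √z.im * √w.im * exp (dist z w / 2) := by
  rw [exp_half_dist, sqrt_mul z.im_pos.le]
  have := z.im_pos; have := w.im_pos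
  field_simp

lemma mul_dist_add_dist_conj_le (a b c d : ℍ) :
    (dist (a : ℂ) b + dist (a : ℂ) (conj (b : ℂ))) *
        (dist (c : ℂ) d + dist (c : ℂ) (conj (d : ℂ))) ≤
      (dist (a : ℂ) c + dist (a : ℂ) (conj (c : ℂ))) *
          (dist (b : ℂ) d + dist (b : ℂ) (conj (d : ℂ))) +
        (dist (b : ℂ) c + dist (b : ℂ) (conj (c : ℂ))) *
          (dist (a : ℂ) d + dist (a : ℂ) (conj (d : ℂ))) := by
  have ptolemy := EuclideanGeometry.mul_dist_le_mul_dist_add_mul_dist (P := ℂ)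
  have p₁ := ptolemy a c b d
  have p₂ := ptolemy a c b (conj (d : ℂ))
  have p₃ := ptolemy a c (conj (b : ℂ)) d
  have p₄ := ptolemy a c (conj (b : ℂ)) (conj (d : ℂ))
  have hcb : dist (c : ℂ) (conj (b : ℂ)) = dist (b : ℂ) (conj (c : ℂ)) := by
    rw [dist_comm, Complex.dist_conj_comm]
  rw [Complex.dist_conj_comm, hcb] at p₃
  rw [Complex.dist_conj_conj, hcb] at p₄
  rw [dist_comm (c : ℂ) b] at p₁ p₂
  have hac : dist (a : ℂ) c * (dist (b : ℂ) d + dist (b : ℂ) (conj (d : ℂ))) ≤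
      dist (a : ℂ) (conj (c : ℂ)) * (dist (b : ℂ) d + dist (b : ℂ) (conj (d : ℂ))) := by
    gcongr
    exact dist_coe_le_dist_coe_conj a c
  linarith

lemma exp_half_dist_add_le (a b c d : ℍ) :
    exp ((dist a b + dist c d) / 2) ≤
      exp ((dist a c + dist b d) / 2) + exp ((dist b c + dist a d) / 2) := by
  have h := mul_dist_add_dist_conj_le a b c d
  simp only [dist_add_dist_conj_eq] at h
  have hk : 0 < 4 * (√a.im * √b.im * √c.im * √d.im) := by
    have := a.im_pos; have := b.im_pos; have := c.im_pos; have := d.im_pos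
    positivity
  simp only [add_div, exp_add]
  refine le_of_mul_le_mul_left ?_ hk
  linear_combination h

lemma fourPointCondition : FourPointCondition ℍ (2 * log 2) := by
  intro w x y z
  set M := max (dist w y + dist x z) (dist w z + dist x y)
  have h := exp_half_dist_add_le w x y z
  have h₁ : exp ((dist w y + dist x z) / 2) ≤ exp (M / 2) := by gcongr; exact le_max_left ..
  have h₂ : exp ((dist x y + dist w z) / 2) ≤ exp (M / 2) := by
    gcongr; rw [add_comm]; exact le_max_right ..
  have h₃ : exp ((dist w x + dist y z) / 2) ≤ exp ((M + 2 * log 2) / 2) := by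
    rw [show (M + 2 * log 2) / 2 = M / 2 + log 2 by ring, exp_add, exp_log two_pos]
    linarith
  linarith [exp_le_exp.1 h₃]

lemma exists_midpoint_of_re_eq {x y : ℍ} (h : x.re = y.re) :
    ∃ m, dist x m = dist x y / 2 ∧ dist y m = dist x y / 2 := by
  set γ : ℝ → ℍ := fun t => mk ⟨x.re, exp t⟩ (exp_pos t)
  have hγ : Isometry γ := isometry_vertical_line x.re
  have hx : γ (log x.im) = x := by ext1; apply Complex.ext <;> simp [γ, exp_log x.im_pos]
  have hy : γ (log y.im) = y := by ext1; apply Complex.ext <;> simp [γ, exp_log y.im_pos, h]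
  rw [← hx, ← hy]
  refine ⟨γ (midpoint ℝ (log x.im) (log y.im)), ?_, ?_⟩ <;>
  simp [hγ.dist_eq, dist_left_midpoint, dist_right_midpoint, div_eq_inv_mul]

def negInvSub (u : ℝ) : SL(2, ℝ) := ⟨!![0, -1; 1, -u], by simp [Matrix.det_fin_two]⟩

lemma coe_negInvSub_smul (u : ℝ) (z : ℍ) :
    ((negInvSub u • z : ℍ) : ℂ) = -((z : ℂ) - u)⁻¹ := by
  rw [coe_specialLinearGroup_apply]
  simp [negInvSub, neg_div, sub_eq_add_neg]

lemma negInvSub_smul_re {u k : ℝ} {z : ℍ} (h : Complex.normSq ((z : ℂ) - u) = k * (z.re - u)) :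
    (negInvSub u • z).re = -k⁻¹ := by
  have hz : Complex.normSq ((z : ℂ) - u) ≠ 0 := by
    rw [Complex.normSq_eq_zero.ne, sub_ne_zero]
    exact fun h0 => z.im_pos.ne' (by simpa using congr_arg Complex.im h0)
  have hre : z.re - u ≠ 0 := fun h0 => hz (by rw [h, h0, mul_zero])
  rw [← coe_re, coe_negInvSub_smul, Complex.neg_re, Complex.inv_re, h, Complex.sub_re, coe_re,
    Complex.ofReal_re, div_mul_cancel_right₀ hre]

lemma exists_smul_re_eq (x y : ℍ) : ∃ g : SL(2, ℝ), (g • x).re = (g • y).re := by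
  by_cases h : x.re = y.re
  · exact ⟨1, by simpa⟩
  obtain ⟨u, k, hx, hy⟩ := Complex.exists_normSq_sub_eq_mul_re_sub h
  exact ⟨negInvSub u, by rw [negInvSub_smul_re hx, negInvSub_smul_re hy]⟩

lemma exists_midpoint (x y : ℍ) : ∃ m, dist x m = dist x y / 2 ∧ dist y m = dist x y / 2 := by
  obtain ⟨g, hg⟩ := exists_smul_re_eq x y
  obtain ⟨m, hxm, hym⟩ := exists_midpoint_of_re_eq hg
  refine ⟨g⁻¹ • m, ?_, ?_⟩ <;> rwa [← dist_smul g, smul_inv_smul, ← dist_smul g x y]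

end UpperHalfPlane

theorem dist_center_barycenter_general (X : Set ℍ)
    (c : ℍ) (hc : IsBarycenter X c)
    (o : ℍ) (R : ℝ) (hXR : X ⊆ Metric.closedBall o R)
    (p' : ℍ) (hp' : p' ∈ X) (hdist : dist o p' = R) :
    R - Metric.diam X / 2 - 5 ≤ dist o c ∧ dist o c ≤ R - Metric.diam X / 2 + 15 := by
  obtain ⟨r, -, hXc, hmin⟩ := hc
  have hclosure : ∀ {z ρ}, X ⊆ closedBall z ρ → closure X ⊆ closedBall z ρ :=
    fun h => closure_minimal h isClosed_closedBall
  have hK : IsCompact (closure X) :=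
    isCompact_of_isClosed_isBounded isClosed_closure (isBounded_closedBall.subset (hclosure hXR))
  obtain ⟨hlow, hup⟩ := UpperHalfPlane.fourPointCondition.dist_center_mem_Icc
    UpperHalfPlane.exists_midpoint hK (hclosure hXc)
    (fun c' r' hr' h => hmin c' r' hr' (subset_closure.trans h)) (hclosure hXR)
    (subset_closure hp') hdist
  rw [diam_closure] at hlow hup
  have hlog : Real.log 2 < 0.7 := Real.log_two_lt_d9.trans (by norm_num)
  constructor <;> linarith

/-- If `closedBall o R` is the smallest ball centered at `o` containing the nonempty finite
set `X` of diameter `D`, then `R - D/2 - 5 ≤ dist o c ≤ R - D/2 + 15` for the barycenter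
`c` of `X`. -/
theorem dist_center_barycenter (X : Set ℍ) (hfin : X.Finite) (hne : X.Nonempty)
    (c : ℍ) (hc : IsBarycenter X c)
    (o : ℍ) (R : ℝ) (hR : 0 ≤ R) (hXR : X ⊆ Metric.closedBall o R)
    (p' : ℍ) (hp' : p' ∈ X) (hdist : dist o p' = R) :
    R - Metric.diam X / 2 - 5 ≤ dist o c ∧ dist o c ≤ R - Metric.diam X / 2 + 15 :=
  dist_center_barycenter_general X c hc o R hXR p' hp' hdist
end

section
/- Let X be a nonempty finite subset of the hyperbolic plane ℍ with diam(X) > 0, let o ∈ ℍ and R ≥ 0 be such that X ⊆ closedBall(o, R) and some point p' ∈ X satisfies dist(o, p') = R (so closedBall(o, R) is the smallest ball centered at o containing X). Then diam(X ∩ closedBall(o, R − 25)) < diam(X). -/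
/-!
In the upper half-plane, `sinh (dist · · / 2)` satisfies Ptolemy's inequality, since
`sinh (dist z w / 2) = ‖z - w‖ / (2 √(im z · im w))` and the denominators of the three
products agree. Applied to `x, o, y, p'` with `x, y` in the ball of radius `R - 25` and
`dist o p' = R`, it gives
`sinh (d(x, y) / 2) · sinh (R / 2) ≤ 2 sinh (diam X / 2) · sinh ((R - 25) / 2)`,
and `sinh (R / 2) ≥ e^{25/2} sinh ((R - 25) / 2)`. Hence `sinh (d(x, y) / 2)` stays below
`2 e^{-25/2} sinh (diam X / 2)`, uniformly smaller than `sinh (diam X / 2)`.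
-/

open scoped UpperHalfPlane
open Real

theorem Real.exp_mul_sinh_le_sinh_add (a : ℝ) {c : ℝ} (hc : 0 ≤ c) :
    exp c * sinh a ≤ sinh (a + c) := by
  rw [sinh_eq, sinh_eq, mul_div_assoc', mul_sub, ← exp_add, ← exp_add, add_comm c a]
  gcongr
  linarith

theorem Metric.diam_lt_of_forall_mul_sinh_half_dist_le {α : Type*} [PseudoMetricSpace α]
    {s : Set α} {K D : ℝ} (hK : 1 < K) (hD : 0 < D)
    (h : ∀ x ∈ s, ∀ y ∈ s, K * sinh (dist x y / 2) ≤ sinh (D / 2)) :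
    Metric.diam s < D := by
  have hsinh : 0 < sinh (D / 2) := sinh_pos_iff.2 (by positivity)
  calc Metric.diam s ≤ 2 * arsinh (sinh (D / 2) / K) := by
        refine Metric.diam_le_of_forall_dist_le ?_ fun x hx y hy => ?_
        · have : 0 ≤ sinh (D / 2) / K := by positivity
          exact mul_nonneg two_pos.le (arsinh_nonneg_iff.2 this)
        rw [← div_le_iff₀' two_pos, ← sinh_le_sinh, sinh_arsinh, le_div_iff₀' (by linarith)]
        exact h x hx y hy
    _ < 2 * arsinh (sinh (D / 2)) := by
        gcongr
        exact arsinh_lt_arsinh.2 (div_lt_self hsinh hK)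
    _ = D := by rw [arsinh_sinh]; ring

namespace UpperHalfPlane

theorem sinh_half_dist_mul_sinh_half_dist_le_s12 (a b c d : ℍ) :
    sinh (dist a c / 2) * sinh (dist b d / 2) ≤
      sinh (dist a b / 2) * sinh (dist c d / 2) + sinh (dist b c / 2) * sinh (dist a d / 2) := by
  have hden : ∀ z w u v : ℍ, 2 * √(z.im * w.im) * (2 * √(u.im * v.im)) =
      4 * (√z.im * √w.im * √u.im * √v.im) := fun z w u v => by
    rw [Real.sqrt_mul z.im_pos.le, Real.sqrt_mul u.im_pos.le]; ring
  simp only [sinh_half_dist, div_mul_div_comm, hden]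
  rw [mul_right_comm √a.im, mul_right_comm √b.im, mul_comm √b.im, ← add_div]
  have := Real.sqrt_pos.2 a.im_pos
  have := Real.sqrt_pos.2 b.im_pos
  have := Real.sqrt_pos.2 c.im_pos
  have := Real.sqrt_pos.2 d.im_pos
  gcongr
  exact EuclideanGeometry.mul_dist_le_mul_dist_add_mul_dist (a : ℂ) b c d

theorem exp_mul_sinh_half_dist_le {o p x y : ℍ} {r c D : ℝ} (hc : 0 ≤ c)
    (hp : r + c ≤ dist o p) (hx : dist x o ≤ r) (hy : dist o y ≤ r)
    (hxp : dist x p ≤ D) (hyp : dist y p ≤ D) :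
    exp (c / 2) * sinh (dist x y / 2) ≤ 2 * sinh (D / 2) := by
  have hD : 0 ≤ D := dist_nonneg.trans hxp
  rcases (dist_nonneg.trans hx).eq_or_lt with rfl | hr
  · rw [(dist_le_zero.1 hx).trans (dist_le_zero.1 hy), dist_self, zero_div, sinh_zero, mul_zero]
    exact mul_nonneg two_pos.le (sinh_nonneg_iff.2 (by positivity))
  have hs : 0 < sinh (r / 2) := sinh_pos_iff.2 (by positivity)
  have hsinh_le {a b : ℝ} (h : a ≤ b) : sinh (a / 2) ≤ sinh (b / 2) :=
    sinh_le_sinh.2 (by linarith)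
  refine le_of_mul_le_mul_right ?_ hs
  calc exp (c / 2) * sinh (dist x y / 2) * sinh (r / 2)
      = sinh (dist x y / 2) * (exp (c / 2) * sinh (r / 2)) := by ring
    _ ≤ sinh (dist x y / 2) * sinh (dist o p / 2) := by
        refine mul_le_mul_of_nonneg_left ?_ (sinh_nonneg_iff.2 (by positivity))
        calc exp (c / 2) * sinh (r / 2) ≤ sinh (r / 2 + c / 2) :=
              exp_mul_sinh_le_sinh_add _ (by positivity)
          _ ≤ sinh (dist o p / 2) := by rw [← add_div]; exact hsinh_le hp
    _ ≤ sinh (dist x o / 2) * sinh (dist y p / 2) + sinh (dist o y / 2) * sinh (dist x p / 2) :=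
        sinh_half_dist_mul_sinh_half_dist_le_s12 x o y p
    _ ≤ sinh (r / 2) * sinh (D / 2) + sinh (r / 2) * sinh (D / 2) := by
        have := sinh_nonneg_iff.2 (by positivity : 0 ≤ dist y p / 2)
        have := sinh_nonneg_iff.2 (by positivity : 0 ≤ r / 2)
        gcongr
        · exact hsinh_le hx
        · exact hsinh_le hyp
        · exact hsinh_le hy
        · exact hsinh_le hxp
    _ = 2 * sinh (D / 2) * sinh (r / 2) := by ring

end UpperHalfPlane

theorem extremal_cancellation_general (X : Set ℍ)
    (hdiam : 0 < Metric.diam X)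
    (o : ℍ) (R : ℝ) (hXR : X ⊆ Metric.closedBall o R)
    (p' : ℍ) (hp' : p' ∈ X) (hdist : dist o p' = R) :
    Metric.diam (X ∩ Metric.closedBall o (R - 25)) < Metric.diam X := by
  have hX : Bornology.IsBounded X := Metric.isBounded_closedBall.subset hXR
  refine Metric.diam_lt_of_forall_mul_sinh_half_dist_le (K := exp (25 / 2) / 2) ?_ hdiam ?_
  · linarith [add_one_le_exp (25 / 2 : ℝ)]
  rintro x ⟨hxX, hx⟩ y ⟨hyX, hy⟩
  have := UpperHalfPlane.exp_mul_sinh_half_dist_le (c := 25) (by norm_num) (by linarith)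
    (Metric.mem_closedBall.1 hx) (Metric.mem_closedBall'.1 hy)
    (Metric.dist_le_diam_of_mem hX hxX hp') (Metric.dist_le_diam_of_mem hX hyX hp')
  linarith

/-- Extremal cancellation: removing the points of `X` within `25` of the boundary of the
smallest enclosing `o`-centered ball strictly decreases the diameter. -/
theorem extremal_cancellation (X : Set ℍ) (hfin : X.Finite) (hne : X.Nonempty)
    (hdiam : 0 < Metric.diam X)
    (o : ℍ) (R : ℝ) (hR : 0 ≤ R) (hXR : X ⊆ Metric.closedBall o R)
    (p' : ℍ) (hp' : p' ∈ X) (hdist : dist o p' = R) :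
    Metric.diam (X ∩ Metric.closedBall o (R - 25)) < Metric.diam X :=
  extremal_cancellation_general X hdiam o R hXR p' hp' hdist
end
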